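/- Let M ∈ ℕ and let P, Q be complex polynomials of degree at most M. Then lim_{N→∞} ⟨P^N, Q^N⟩_N = ⟨P, Q⟩_{𝔽²}; in particular lim_{N→∞} ‖P^N‖_N = ‖P‖_{𝔽²}. -/

import Mathlib

open MeasureTheory Complex
open scoped ComplexOrder

noncomputable section

/-- The probability measure `dm(z) = dA(z)/(π(1+|z|²)²)` on `ℂ`. -/
def mC : Measure ℂ :=
  volume.withDensity fun z => ENNReal.ofReal (1 / (Real.pi * (1 + ‖z‖ ^ 2) ^ 2))

/-- The weighted density `u(z) = |f(z)|²/(1+|z|²)^N`. -/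
def uN (N : ℕ) (f : ℂ → ℂ) (z : ℂ) : ℝ :=
  ‖(f z)‖ ^ 2 / (1 + ‖z‖ ^ 2) ^ N

/-- The squared norm `‖f‖_N² = (N+1)∫ |f(z)|²/(1+|z|²)^N dm(z)` on `𝒫_N`. -/
def normNsq (N : ℕ) (f : ℂ → ℂ) : ℝ :=
  (N + 1) * ∫ z, uN N f z ∂mC

/-- The Hermitian product `⟨f,g⟩_N = (N+1)∫ f(z)·conj(g(z))/(1+|z|²)^N dm(z)`. -/
def innerN (N : ℕ) (f g : ℂ → ℂ) : ℂ :=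
  (N + 1) * ∫ z, f z * (starRingEnd ℂ) (g z) / (((1 + ‖z‖ ^ 2 : ℝ) : ℂ)) ^ N ∂mC

/-- The normalized reproducing kernel `κ_{N,a}(z) = (1+z·conj a)^N/(1+|a|²)^{N/2}`. -/
def kerN (N : ℕ) (a z : ℂ) : ℂ :=
  (1 + z * (starRingEnd ℂ) a) ^ N / (((1 + ‖a‖ ^ 2) ^ ((N : ℝ) / 2) : ℝ) : ℂ)

/-- `D_N(f) = min{‖f − e^{iθ}κ_{N,a}‖_N : a ∈ ℂ, θ ∈ [0,2π]}`. -/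
def DN (N : ℕ) (f : ℂ → ℂ) : ℝ :=
  sInf { d | ∃ a : ℂ, ∃ θ ∈ Set.Icc (0 : ℝ) (2 * Real.pi),
    d = Real.sqrt (normNsq N fun z => f z - Complex.exp (θ * Complex.I) * kerN N a z) }

/-- The concentration `C_{N,Ω}(f) = (N+1)∫_Ω |f(z)|²/(1+|z|²)^N dm(z) / ‖f‖_N²`. -/
def concN (N : ℕ) (Ω : Set ℂ) (f : ℂ → ℂ) : ℝ :=
  ((N + 1) * ∫ z in Ω, uN N f z ∂mC) / normNsq N f

/-- The deficit `δ_N(f,Ω) = 1 − C_{N,Ω}(f)/C_{N,Ω*}(1)`, where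
`C_{N,Ω*}(1) = 1 − (1−m(Ω))^{N+1}`. -/
def deltaN (N : ℕ) (Ω : Set ℂ) (f : ℂ → ℂ) : ℝ :=
  1 - concN N Ω f / (1 - (1 - (mC Ω).toReal) ^ (N + 1))

/-- The generalized Wehrl entropy `S_{N,Φ}(f) = −(N+1)∫ Φ(u(z)) dm(z)`. -/
def entN (N : ℕ) (Φ : ℝ → ℝ) (f : ℂ → ℂ) : ℝ :=
  -((N + 1) * ∫ z, Φ (uN N f z) ∂mC)

/-- The Wehrl entropy `S_N(f) = −(N+1)∫ u(z)·log u(z) dm(z)`. -/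
def wehrlN (N : ℕ) (f : ℂ → ℂ) : ℝ :=
  -((N + 1) * ∫ z, uN N f z * Real.log (uN N f z) ∂mC)

/-- `T = sup_{z∈ℂ} u(z)`. -/
def TN (N : ℕ) (f : ℂ → ℂ) : ℝ := ⨆ z : ℂ, uN N f z

/-- The distribution function `μ(t) = m({z : u(z) > t})`. -/
def muN (N : ℕ) (f : ℂ → ℂ) (t : ℝ) : ℝ := (mC { z | uN N f z > t }).toReal

/-- `μ₀(t) = 1 − t^{1/N}`. -/
def mu0 (N : ℕ) (t : ℝ) : ℝ := 1 - t ^ ((1 : ℝ) / N)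

/-- The chordal distance on `ℂ`. -/
def chordalDist (z w : ℂ) : ℝ :=
  ‖(z - w)‖ /
    (Real.sqrt Real.pi * Real.sqrt ((1 + ‖z‖ ^ 2) * (1 + ‖w‖ ^ 2)))

/-- The chordal disc `𝒟_r(z)`. -/
def chordalDisc (z : ℂ) (r : ℝ) : Set ℂ := { w | chordalDist z w ≤ r }

/-- The Fraenkel asymmetry `𝒜_m(Ω)` with respect to the measure `m` and chordal discs. -/
def asymM (Ω : Set ℂ) : ℝ :=
  sInf { A | ∃ z : ℂ, ∃ r : ℝ, mC (chordalDisc z r) = mC Ω ∧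
    A = ((mC (Ω \ chordalDisc z r)).toReal + (mC (chordalDisc z r \ Ω)).toReal) /
      (mC Ω).toReal }

/-- The squared Fock norm `‖f‖_{𝔽²}²`. -/
def normFsq (f : ℂ → ℂ) : ℝ :=
  ∫ z : ℂ, ‖(f z)‖ ^ 2 * Real.exp (-Real.pi * ‖z‖ ^ 2)

/-- The Fock Hermitian product. -/
def innerF (f g : ℂ → ℂ) : ℂ :=
  ∫ z : ℂ, f z * (starRingEnd ℂ) (g z) * ((Real.exp (-Real.pi * ‖z‖ ^ 2) : ℝ) : ℂ)

/-- The normalized Fock reproducing kernel `κ_a(z) = e^{−π|a|²/2}e^{π·conj(a)·z}`. -/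
def kerF (a z : ℂ) : ℂ :=
  ((Real.exp (-Real.pi * ‖a‖ ^ 2 / 2) : ℝ) : ℂ) *
    Complex.exp ((Real.pi : ℂ) * (starRingEnd ℂ) a * z)

/-- `D(f) = min{‖f − e^{iθ}κ_a‖_{𝔽²} : a ∈ ℂ, θ ∈ [0,2π]}`. -/
def DF (f : ℂ → ℂ) : ℝ :=
  sInf { d | ∃ a : ℂ, ∃ θ ∈ Set.Icc (0 : ℝ) (2 * Real.pi),
    d = Real.sqrt (normFsq fun z => f z - Complex.exp (θ * Complex.I) * kerF a z) }

/-- The Fock concentration `C_Ω(f)`. -/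
def concF (Ω : Set ℂ) (f : ℂ → ℂ) : ℝ :=
  (∫ z in Ω, ‖(f z)‖ ^ 2 * Real.exp (-Real.pi * ‖z‖ ^ 2)) / normFsq f

/-- The Fock deficit `δ(f,Ω) = 1 − (∫_Ω |f|²e^{−π|z|²})/(1 − e^{−|Ω|})`. -/
def deltaF (Ω : Set ℂ) (f : ℂ → ℂ) : ℝ :=
  1 - (∫ z in Ω, ‖(f z)‖ ^ 2 * Real.exp (-Real.pi * ‖z‖ ^ 2)) /
      (1 - Real.exp (-(volume Ω).toReal))

/-- The Fock generalized Wehrl entropy `S_Φ(f)`. -/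
def entF (Φ : ℝ → ℝ) (f : ℂ → ℂ) : ℝ :=
  -∫ z : ℂ, Φ (‖(f z)‖ ^ 2 * Real.exp (-Real.pi * ‖z‖ ^ 2))

/-- The Euclidean Fraenkel asymmetry `𝒜(Ω)`. -/
def asymEuc (Ω : Set ℂ) : ℝ :=
  sInf { A | ∃ z : ℂ, ∃ r : ℝ, volume (Metric.closedBall z r) = volume Ω ∧
    A = 2 * (volume (Ω \ Metric.closedBall z r)).toReal / (volume Ω).toReal }

/-- The rescaled function `f^N(z) = f(√(N/π)·z)`. -/
def rescaleF (N : ℕ) (f : ℂ → ℂ) : ℂ → ℂ :=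
  fun z => f (((Real.sqrt (N / Real.pi) : ℝ) : ℂ) * z)

/-- The rescaled set `Ω^N = √(π/N)·Ω`. -/
def rescaleSet (N : ℕ) (Ω : Set ℂ) : Set ℂ :=
  (fun z => ((Real.sqrt (Real.pi / N) : ℝ) : ℂ) * z) '' Ω


/-!
Substituting `z = √(π/N) w` turns `⟨P^N, Q^N⟩_N` into
`(N+1)/N · ∫ P(w) conj(Q(w)) (1 + π|w|²/N)^{-(N+2)} dw`. The weight tends pointwise to
`e^{-π|w|²}`, and for `N ≥ k` the inequality `(1 + x/N)^N ≥ (1 + x/(2k))^k` (Bernoulli applied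
to blocks of `⌊N/k⌋` factors) bounds it by a multiple of `(1 + |w|²)^{-k}`, which beats the
polynomial growth of `P conj(Q)` once `k` exceeds `deg P + deg Q + 1`. Dominated convergence
concludes, and the norms follow by taking `P = Q`.
-/

open Filter Topology Polynomial

lemma one_add_div_two_mul_pow_le_one_add_div_pow {k N : ℕ} (hk : 0 < k) (hkN : k ≤ N)
    {x : ℝ} (hx : 0 ≤ x) : (1 + x / (2 * k)) ^ k ≤ (1 + x / N) ^ N := by
  set q := N / k
  have hqk : q * k ≤ N := Nat.div_mul_le_self N k
  have hN : N ≤ 2 * k * q := by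
    have hlt : N < q * k + k := Nat.lt_div_mul_add hk
    have hq : 1 ≤ q := (Nat.one_le_div_iff hk).2 hkN
    nlinarith
  have hNpos : (0 : ℝ) < N := by exact_mod_cast hk.trans_le hkN
  have hblock : 1 + x / (2 * k) ≤ 1 + q * (x / N) := by
    have hN' : (N : ℝ) ≤ 2 * k * q := by exact_mod_cast hN
    gcongr
    calc x / (2 * k) = x / N * (N / (2 * k)) := by field_simp
      _ ≤ x / N * q := by gcongr; rwa [div_le_iff₀ (by positivity), mul_comm]
      _ = q * (x / N) := mul_comm _ _
  calc (1 + x / (2 * k)) ^ k ≤ (1 + q * (x / N)) ^ k := by gcongr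
    _ ≤ ((1 + x / N) ^ q) ^ k := by
        gcongr
        exact one_add_mul_le_pow (by linarith [div_nonneg hx hNpos.le]) q
    _ = (1 + x / N) ^ (q * k) := (pow_mul _ _ _).symm
    _ ≤ (1 + x / N) ^ N := pow_le_pow_right₀ (by simp; positivity) hqk

/-- The weight of `⟨·,·⟩_N` after the substitution `z = √(π/N) w`. -/
def rescaledWeight (N : ℕ) (w : ℂ) : ℝ :=
  ((1 + Real.pi * ‖w‖ ^ 2 / N) ^ (N + 2))⁻¹

lemma tendsto_rescaledWeight (w : ℂ) :
    Tendsto (fun N => rescaledWeight N w) atTop (𝓝 (Real.exp (-Real.pi * ‖w‖ ^ 2))) := by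
  set t := Real.pi * ‖w‖ ^ 2
  have hsq : Tendsto (fun N : ℕ => (1 + t / N) ^ 2) atTop (𝓝 1) := by
    simpa using ((tendsto_const_div_atTop_nhds_zero_nat t).const_add 1).pow 2
  have := ((Real.tendsto_one_add_div_pow_exp t).mul hsq).inv₀ (by positivity)
  simpa only [rescaledWeight, ← pow_add, mul_one, neg_mul, Real.exp_neg] using this

lemma rescaledWeight_le {k N : ℕ} (hk : 0 < k) (hkN : k ≤ N) (w : ℂ) :
    rescaledWeight N w ≤ (1 + 2 * k / Real.pi) ^ k * ((1 + ‖w‖ ^ 2) ^ k)⁻¹ := by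
  set X := (1 + Real.pi * ‖w‖ ^ 2 / N) ^ (N + 2)
  have hbase : 1 + ‖w‖ ^ 2 ≤ (1 + 2 * k / Real.pi) * (1 + Real.pi * ‖w‖ ^ 2 / (2 * k)) := by
    have : (0 : ℝ) < k := by exact_mod_cast hk
    rw [show (1 + 2 * k / Real.pi) * (1 + Real.pi * ‖w‖ ^ 2 / (2 * k))
      = 1 + ‖w‖ ^ 2 + (2 * k / Real.pi + Real.pi * ‖w‖ ^ 2 / (2 * k)) by field_simp; ring]
    linarith [show 0 ≤ 2 * k / Real.pi + Real.pi * ‖w‖ ^ 2 / (2 * k) by positivity]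
  have hX : (1 + ‖w‖ ^ 2) ^ k ≤ (1 + 2 * k / Real.pi) ^ k * X :=
    calc (1 + ‖w‖ ^ 2) ^ k
        ≤ (1 + 2 * k / Real.pi) ^ k * (1 + Real.pi * ‖w‖ ^ 2 / (2 * k)) ^ k := by
          rw [← mul_pow]; gcongr
      _ ≤ (1 + 2 * k / Real.pi) ^ k * (1 + Real.pi * ‖w‖ ^ 2 / N) ^ N := by
          gcongr; exact one_add_div_two_mul_pow_le_one_add_div_pow hk hkN (by positivity)
      _ ≤ (1 + 2 * k / Real.pi) ^ k * X := by
          gcongr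
          exact pow_le_pow_right₀ (le_add_of_nonneg_right (by positivity)) (by omega)
  have hC : 0 < (1 + 2 * k / Real.pi) ^ k := by positivity
  calc rescaledWeight N w = (1 + 2 * k / Real.pi) ^ k * ((1 + 2 * k / Real.pi) ^ k * X)⁻¹ := by
        rw [mul_inv, ← mul_assoc, mul_inv_cancel₀ hC.ne', one_mul]; rfl
    _ ≤ (1 + 2 * k / Real.pi) ^ k * ((1 + ‖w‖ ^ 2) ^ k)⁻¹ := by gcongr

lemma Polynomial.norm_eval_le_mul_one_add_norm_sq_pow {𝕜 : Type*} [NormedField 𝕜]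
    (P : 𝕜[X]) (w : 𝕜) :
    ‖P.eval w‖ ≤
      (∑ i ∈ Finset.range (P.natDegree + 1), ‖P.coeff i‖) * (1 + ‖w‖ ^ 2) ^ P.natDegree := by
  rw [eval_eq_sum_range, Finset.sum_mul]
  refine (norm_sum_le _ _).trans (Finset.sum_le_sum fun i hi => ?_)
  have hw : ‖w‖ ≤ 1 + ‖w‖ ^ 2 := by nlinarith [sq_nonneg (‖w‖ - 1)]
  rw [norm_mul, norm_pow]
  gcongr
  calc ‖w‖ ^ i ≤ (1 + ‖w‖ ^ 2) ^ i := by gcongr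
    _ ≤ (1 + ‖w‖ ^ 2) ^ P.natDegree :=
      pow_le_pow_right₀ (by simp) (Nat.lt_succ_iff.1 (Finset.mem_range.1 hi))

lemma integrable_inv_one_add_norm_sq_pow {E : Type*} [NormedAddCommGroup E] [NormedSpace ℝ E]
    [FiniteDimensional ℝ E] [MeasurableSpace E] [BorelSpace E] (μ : Measure E)
    [μ.IsAddHaarMeasure] {m : ℕ} (hm : Module.finrank ℝ E < 2 * m) :
    Integrable (fun x : E => ((1 + ‖x‖ ^ 2) ^ m)⁻¹) μ := by
  have := integrable_rpow_neg_one_add_norm_sq (μ := μ) (r := 2 * m) (by exact_mod_cast hm)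
  refine this.congr (Eventually.of_forall fun x => ?_)
  simp only [neg_div, mul_div_cancel_left₀ _ (two_ne_zero' ℝ)]
  rw [Real.rpow_neg (by positivity), Real.rpow_natCast]

lemma tendsto_integral_mul_rescaledWeight {f : ℂ → ℂ} (hf : AEStronglyMeasurable f) {C : ℝ}
    {d : ℕ} (hfC : ∀ w, ‖f w‖ ≤ C * (1 + ‖w‖ ^ 2) ^ d) :
    Tendsto (fun N => ∫ w, f w * (rescaledWeight N w : ℂ)) atTop
      (𝓝 (∫ w, f w * (Real.exp (-Real.pi * ‖w‖ ^ 2) : ℂ))) := by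
  set k := d + 2
  set K := (1 + 2 * k / Real.pi) ^ k
  refine tendsto_integral_filter_of_dominated_convergence (fun w => C * K * ((1 + ‖w‖ ^ 2) ^ 2)⁻¹)
    (Eventually.of_forall fun N => hf.mul (by unfold rescaledWeight; fun_prop)) ?_
    ((integrable_inv_one_add_norm_sq_pow volume (by simp)).const_mul _)
    (Eventually.of_forall fun w => (Complex.continuous_ofReal.tendsto _).comp
      (tendsto_rescaledWeight w) |>.const_mul (f w))
  filter_upwards [eventually_ge_atTop k] with N hkN
  refine Eventually.of_forall fun w => ?_
  have hW := rescaledWeight_le (by omega) hkN w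
  have hW0 : 0 ≤ rescaledWeight N w := by unfold rescaledWeight; positivity
  calc ‖f w * (rescaledWeight N w : ℂ)‖ = ‖f w‖ * rescaledWeight N w := by
        rw [norm_mul, Complex.norm_real, Real.norm_of_nonneg hW0]
    _ ≤ C * (1 + ‖w‖ ^ 2) ^ d * (K * ((1 + ‖w‖ ^ 2) ^ k)⁻¹) :=
        mul_le_mul (hfC w) hW hW0 ((norm_nonneg _).trans (hfC w))
    _ = C * K * ((1 + ‖w‖ ^ 2) ^ 2)⁻¹ := by
        rw [show k = d + 2 from rfl, pow_add]; field_simp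

lemma integral_mC (g : ℂ → ℂ) :
    ∫ z, g z ∂mC = ∫ z, ((Real.pi * (1 + ‖z‖ ^ 2) ^ 2)⁻¹ : ℝ) * g z := by
  rw [mC, integral_withDensity_eq_integral_toReal_smul (by fun_prop)
    (Eventually.of_forall fun _ => ENNReal.ofReal_lt_top)]
  congr 1 with z
  rw [ENNReal.toReal_ofReal (by positivity), one_div, Complex.real_smul]

lemma innerN_rescaleF {N : ℕ} (hN : N ≠ 0) (f g : ℂ → ℂ) :
    innerN N (rescaleF N f) (rescaleF N g) =
      ((N + 1) / N : ℂ) * ∫ w, f w * starRingEnd ℂ (g w) * (rescaledWeight N w : ℂ) := by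
  have hN' : (0 : ℝ) < N := by exact_mod_cast Nat.pos_of_ne_zero hN
  set s := Real.sqrt (N / Real.pi)
  have hs : s ^ 2 = N / Real.pi := Real.sq_sqrt (by positivity)
  have hweight (z : ℂ) : rescaledWeight N (s • z) = ((1 + ‖z‖ ^ 2) ^ (N + 2))⁻¹ := by
    rw [rescaledWeight, norm_smul, mul_pow, Real.norm_eq_abs, sq_abs, hs]
    field_simp
  set H := fun w => f w * starRingEnd ℂ (g w) * (rescaledWeight N w : ℂ)
  have hintegrand (z : ℂ) : ((Real.pi * (1 + ‖z‖ ^ 2) ^ 2)⁻¹ : ℝ) *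
      (rescaleF N f z * starRingEnd ℂ (rescaleF N g z) / ((1 + ‖z‖ ^ 2 : ℝ) : ℂ) ^ N) =
      (Real.pi⁻¹ : ℂ) * H (s • z) := by
    have hf : rescaleF N f z = f (s • z) := by rw [Complex.real_smul]; rfl
    have hg : rescaleF N g z = g (s • z) := by rw [Complex.real_smul]; rfl
    simp only [H, hf, hg, hweight]
    push_cast
    field_simp
    ring
  rw [innerN, integral_mC]
  simp only [hintegrand]
  rw [integral_const_mul, Measure.integral_comp_smul, Complex.finrank_real_complex, hs,
    abs_of_pos (by positivity), Complex.real_smul]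
  push_cast
  field_simp

lemma tendsto_innerN_rescaleF {f g : ℂ → ℂ} (hf : AEStronglyMeasurable f)
    (hg : AEStronglyMeasurable g) {A B : ℝ} {a b : ℕ}
    (hfA : ∀ w, ‖f w‖ ≤ A * (1 + ‖w‖ ^ 2) ^ a) (hgB : ∀ w, ‖g w‖ ≤ B * (1 + ‖w‖ ^ 2) ^ b) :
    Tendsto (fun N => innerN N (rescaleF N f) (rescaleF N g)) atTop (𝓝 (innerF f g)) := by
  have hfactor : Tendsto (fun N : ℕ => ((N + 1) / N : ℂ)) atTop (𝓝 1) := by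
    simpa using (tendsto_natCast_div_add_atTop (1 : ℂ)).inv₀ one_ne_zero
  have hbound (w : ℂ) : ‖f w * starRingEnd ℂ (g w)‖ ≤ A * B * (1 + ‖w‖ ^ 2) ^ (a + b) := by
    rw [norm_mul, Complex.norm_conj, pow_add]
    calc ‖f w‖ * ‖g w‖ ≤ (A * (1 + ‖w‖ ^ 2) ^ a) * (B * (1 + ‖w‖ ^ 2) ^ b) :=
          mul_le_mul (hfA w) (hgB w) (norm_nonneg _) ((norm_nonneg _).trans (hfA w))
      _ = _ := by ring
  have := hfactor.mul (tendsto_integral_mul_rescaledWeight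
    (hf.mul (Complex.continuous_conj.comp_aestronglyMeasurable hg)) hbound)
  rw [one_mul] at this
  refine this.congr' ?_
  filter_upwards [eventually_ne_atTop 0] with N hN
  exact (innerN_rescaleF hN f g).symm

lemma ofReal_normNsq (N : ℕ) (f : ℂ → ℂ) : (normNsq N f : ℂ) = innerN N f f := by
  rw [normNsq, innerN, Complex.ofReal_mul, ← integral_complex_ofReal]
  push_cast
  simp only [uN, Complex.mul_conj, Complex.normSq_eq_norm_sq]
  push_cast
  rfl

lemma ofReal_normFsq (f : ℂ → ℂ) : (normFsq f : ℂ) = innerF f f := by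
  rw [normFsq, innerF, ← integral_complex_ofReal]
  simp only [Complex.mul_conj, Complex.normSq_eq_norm_sq]
  push_cast
  rfl

theorem inner_limit_general (P Q : Polynomial ℂ) :
    Filter.Tendsto (fun N : ℕ =>
        innerN N (rescaleF N fun z => P.eval z) (rescaleF N fun z => Q.eval z))
      Filter.atTop (nhds (innerF (fun z => P.eval z) (fun z => Q.eval z))) ∧
    Filter.Tendsto (fun N : ℕ => Real.sqrt (normNsq N (rescaleF N fun z => P.eval z)))
      Filter.atTop (nhds (Real.sqrt (normFsq fun z => P.eval z))) := by
  have hinner (P Q : ℂ[X]) := tendsto_innerN_rescaleF P.continuous.aestronglyMeasurable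
    Q.continuous.aestronglyMeasurable P.norm_eval_le_mul_one_add_norm_sq_pow
    Q.norm_eval_le_mul_one_add_norm_sq_pow
  refine ⟨hinner P Q, ?_⟩
  have hnorm : Tendsto (fun N => normNsq N (rescaleF N fun z => P.eval z)) atTop
      (𝓝 (normFsq fun z => P.eval z)) := by
    simpa only [Function.comp_def, ← ofReal_normNsq, ← ofReal_normFsq, Complex.ofReal_re]
      using (Complex.continuous_re.tendsto _).comp (hinner P P)
  exact (Real.continuous_sqrt.tendsto _).comp hnorm

/-- **Convergence of the inner products to the Fock one** (Lemma 4.1).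
For polynomials `P, Q` of degree at most `M`, `⟨P^N,Q^N⟩_N → ⟨P,Q⟩_{𝔽²}` as `N → ∞`;
in particular `‖P^N‖_N → ‖P‖_{𝔽²}`. -/
theorem inner_limit (M : ℕ) (P Q : Polynomial ℂ)
    (hP : P.natDegree ≤ M) (hQ : Q.natDegree ≤ M) :
    Filter.Tendsto (fun N : ℕ =>
        innerN N (rescaleF N fun z => P.eval z) (rescaleF N fun z => Q.eval z))
      Filter.atTop (nhds (innerF (fun z => P.eval z) (fun z => Q.eval z))) ∧
    Filter.Tendsto (fun N : ℕ => Real.sqrt (normNsq N (rescaleF N fun z => P.eval z)))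
      Filter.atTop (nhds (Real.sqrt (normFsq fun z => P.eval z))) :=
  inner_limit_general P Q

end
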